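/- Let d be a positive integer and p : ℝ^d → ℝ a continuous probability density with finite second moments (∫ ‖y‖² p(y) dy < ∞). Let x' ∈ ℝ^d with p(x') > 0. Then lim_{δ → −∞} [ e^{−2δ} ∫_{ℝ^d} p(x' − y) ‖y‖² N^δ_d(y) dy ] / [ ∫_{ℝ^d} p(x' − y) N^δ_d(y) dy ] = d. -/

import Mathlib

/-!
Write `c = e^{-δ}`. Then `N^δ_d(y) = c^d N^0_d(c y)` and
`e^{-2δ} ‖y‖² N^δ_d(y) = c^d ψ(c y)` with `ψ(u) = ‖u‖² N^0_d(u)`, so numerator and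
denominator integrate `p(x' - ·)` against rescalings of the fixed profiles `ψ` and `N^0_d`.
As `δ → -∞`, `c → ∞` and these rescalings concentrate at the origin, so the two integrals
tend to `(∫ ψ) p(x')` and `(∫ N^0_d) p(x')`. Finally `∫ N^0_d = 1` and `∫ ψ = d`: in
polar coordinates the second moment reduces to
`∫₀^∞ r^{d+1} e^{-r²/2} dr = d ∫₀^∞ r^{d-1} e^{-r²/2} dr`, i.e. to `Γ(s + 1) = s Γ(s)`.
-/

open MeasureTheory Real Filter Topology

/-- The density of the Gaussian distribution `N(0, e^{2δ} I_k)` on `ℝ^k`. -/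
noncomputable def gaussDens (k : ℕ) (δ : ℝ) (y : EuclideanSpace ℝ (Fin k)) : ℝ :=
  (2 * π) ^ (-(k : ℝ) / 2) * Real.exp (-(k : ℝ) * δ) *
    Real.exp (-Real.exp (-2 * δ) * ‖y‖ ^ 2 / 2)

open Module Bornology Set

theorem integral_Ioi_rpow_add_two_mul_exp_neg_mul_sq {b q : ℝ} (hb : 0 < b) (hq : -1 < q) :
    ∫ x in Ioi (0 : ℝ), x ^ (q + 2) * exp (-b * x ^ 2) =
      (q + 1) / (2 * b) * ∫ x in Ioi (0 : ℝ), x ^ q * exp (-b * x ^ 2) := by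
  have gamma_formula := fun (s : ℝ) (hs : -1 < s) =>
    integral_rpow_mul_exp_neg_mul_rpow two_pos hs hb
  simp only [rpow_two] at gamma_formula
  rw [gamma_formula _ (by linarith), gamma_formula q hq,
    show (q + 2 + 1) / 2 = (q + 1) / 2 + 1 by ring, Gamma_add_one (by linarith),
    show -(q + 2 + 1) / 2 = -(q + 1) / 2 + -1 by ring, rpow_add hb, rpow_neg_one]
  field_simp

theorem tendsto_norm_pow_mul_exp_neg_mul_norm_sq_cobounded {F : Type*} [NormedAddCommGroup F]
    {b : ℝ} (hb : 0 < b) (n : ℕ) :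
    Tendsto (fun x : F => ‖x‖ ^ n * exp (-b * ‖x‖ ^ 2)) (cobounded F) (𝓝 0) := by
  have decay := (tendsto_rpow_abs_mul_exp_neg_mul_sq_cocompact hb n).mono_left
    (cocompact_eq_atBot_atTop (α := ℝ) ▸ le_sup_right)
  refine (decay.comp tendsto_norm_cobounded_atTop).congr fun x => ?_
  simp [abs_norm]

section AddHaar

variable {F : Type*} [NormedAddCommGroup F] [NormedSpace ℝ F] [FiniteDimensional ℝ F]
  [MeasurableSpace F] [BorelSpace F] (μ : Measure F) [μ.IsAddHaarMeasure]

theorem integrable_norm_pow_mul_exp_neg_mul_norm_sq {b : ℝ} (hb : 0 < b) (n : ℕ) :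
    Integrable (fun x => ‖x‖ ^ n * exp (-b * ‖x‖ ^ 2)) μ := by
  rcases subsingleton_or_nontrivial F with hF | hF
  · exact Integrable.of_finite
  rw [integrable_fun_norm_addHaar μ (f := fun r => r ^ n * exp (-b * r ^ 2))]
  refine (integrableOn_rpow_mul_exp_neg_mul_sq hb (s := (finrank ℝ F - 1 + n : ℕ))
    (by linarith [Nat.cast_nonneg (α := ℝ) (finrank ℝ F - 1 + n)])).congr_fun
    (fun y _ => ?_) measurableSet_Ioi
  simp only [rpow_natCast, pow_add, smul_eq_mul, mul_assoc]

theorem integral_norm_sq_mul_exp_neg_mul_norm_sq {b : ℝ} (hb : 0 < b) :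
    ∫ x, ‖x‖ ^ 2 * exp (-b * ‖x‖ ^ 2) ∂μ =
      finrank ℝ F / (2 * b) * ∫ x, exp (-b * ‖x‖ ^ 2) ∂μ := by
  rcases subsingleton_or_nontrivial F with hF | hF
  · simp [Subsingleton.elim _ (0 : F), finrank_zero_of_subsingleton]
  obtain ⟨n, hn⟩ : ∃ n, finrank ℝ F = n + 1 := Nat.exists_eq_add_one.mpr finrank_pos
  rw [integral_fun_norm_addHaar μ (fun r => r ^ 2 * exp (-b * r ^ 2)),
    integral_fun_norm_addHaar μ (fun r => exp (-b * r ^ 2))]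
  simp only [hn, add_tsub_cancel_right, smul_eq_mul]
  have radial : ∫ y in Ioi (0 : ℝ), y ^ n * (y ^ 2 * exp (-b * y ^ 2)) =
      ∫ y in Ioi (0 : ℝ), y ^ ((n : ℝ) + 2) * exp (-b * y ^ 2) := by
    refine setIntegral_congr_fun measurableSet_Ioi fun y (hy : 0 < y) => ?_
    rw [rpow_add hy, rpow_natCast, rpow_two, mul_assoc]
  rw [radial,
    integral_Ioi_rpow_add_two_mul_exp_neg_mul_sq hb (by linarith [n.cast_nonneg (α := ℝ)])]
  simp_rw [← rpow_natCast]
  push_cast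
  ring

variable {E : Type*} [NormedAddCommGroup E] [NormedSpace ℝ E] [CompleteSpace E]

theorem tendsto_integral_comp_smul_smul_of_integrable_of_nonneg
    {φ : F → ℝ} (hφ : ∀ x, 0 ≤ φ x) (hφi : Integrable φ μ)
    (h : Tendsto (fun x ↦ ‖x‖ ^ finrank ℝ F * φ x) (cobounded F) (𝓝 0))
    {g : F → E} (hg : Integrable g μ) (h'g : ContinuousAt g 0) :
    Tendsto (fun c : ℝ ↦ ∫ x, (c ^ finrank ℝ F * φ (c • x)) • g x ∂μ) atTop
      (𝓝 ((∫ x, φ x ∂μ) • g 0)) := by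
  rcases (integral_nonneg (μ := μ) (f := φ) hφ).eq_or_lt with hzero | hpos
  · have hφ0 : φ =ᵐ[μ] 0 := (integral_eq_zero_iff_of_nonneg hφ hφi).mp hzero.symm
    rw [← hzero, zero_smul]
    refine tendsto_const_nhds.congr' ?_
    filter_upwards [eventually_gt_atTop 0] with c hc
    refine (integral_eq_zero_of_ae ?_).symm
    filter_upwards [(Measure.quasiMeasurePreserving_smul μ hc.ne').ae_eq hφ0] with x hx
    simp only [Function.comp_apply, Pi.zero_apply] at hx
    simp [hx]
  · set a := ∫ x, φ x ∂μ
    have normalized := tendsto_integral_comp_smul_smul_of_integrable (μ := μ)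
      (φ := fun x ↦ a⁻¹ * φ x) (fun x ↦ mul_nonneg (inv_nonneg.2 hpos.le) (hφ x))
      (by rw [integral_const_mul, inv_mul_cancel₀ hpos.ne'])
      (by simpa only [mul_left_comm, mul_zero] using h.const_mul a⁻¹) hg h'g
    refine (normalized.const_smul a).congr fun c ↦ ?_
    rw [← integral_smul]
    congr 1 with x
    rw [smul_smul]
    congr 1
    field_simp

end AddHaar

theorem gaussDens_zero_apply (k : ℕ) (y : EuclideanSpace ℝ (Fin k)) :
    gaussDens k 0 y = (2 * π) ^ (-(k : ℝ) / 2) * exp (-(1 / 2) * ‖y‖ ^ 2) := by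
  simp only [gaussDens, mul_zero, exp_zero]
  ring_nf

theorem gaussDens_eq_pow_mul_gaussDens_zero (k : ℕ) (δ : ℝ) (y : EuclideanSpace ℝ (Fin k)) :
    gaussDens k δ y = exp (-δ) ^ k * gaussDens k 0 (exp (-δ) • y) := by
  rw [gaussDens, gaussDens_zero_apply, norm_smul, norm_of_nonneg (exp_pos _).le, mul_pow,
    ← exp_nat_mul, ← exp_nat_mul]
  ring_nf

theorem gaussDens_pos (k : ℕ) (δ : ℝ) (y : EuclideanSpace ℝ (Fin k)) :
    0 < gaussDens k δ y := by
  unfold gaussDens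
  positivity

theorem integrable_norm_pow_mul_gaussDens_zero (k n : ℕ) :
    Integrable fun y : EuclideanSpace ℝ (Fin k) => ‖y‖ ^ n * gaussDens k 0 y := by
  refine ((integrable_norm_pow_mul_exp_neg_mul_norm_sq volume one_half_pos n).const_mul
    ((2 * π) ^ (-(k : ℝ) / 2))).congr (.of_forall fun y => ?_)
  simp only [gaussDens_zero_apply]
  ring

theorem tendsto_norm_pow_mul_gaussDens_zero_cobounded (k n : ℕ) :
    Tendsto (fun y : EuclideanSpace ℝ (Fin k) => ‖y‖ ^ n * gaussDens k 0 y)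
      (cobounded _) (𝓝 0) := by
  have decay := (tendsto_norm_pow_mul_exp_neg_mul_norm_sq_cobounded
    (F := EuclideanSpace ℝ (Fin k)) one_half_pos n).const_mul ((2 * π) ^ (-(k : ℝ) / 2))
  rw [mul_zero] at decay
  refine decay.congr fun y => ?_
  rw [gaussDens_zero_apply]
  ring

theorem integral_gaussDens_zero (k : ℕ) : ∫ y, gaussDens k 0 y = 1 := by
  simp only [gaussDens_zero_apply, integral_const_mul, finrank_euclideanSpace_fin,
    GaussianFourier.integral_rexp_neg_mul_sq_norm (one_half_pos (α := ℝ))]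
  rw [show π / (1 / 2) = 2 * π by ring, ← rpow_add (by positivity), neg_div, neg_add_cancel,
    rpow_zero]

theorem integral_norm_sq_mul_gaussDens_zero (k : ℕ) :
    ∫ y, ‖y‖ ^ 2 * gaussDens k 0 y = k := by
  calc ∫ y, ‖y‖ ^ 2 * gaussDens k 0 y
      = (2 * π) ^ (-(k : ℝ) / 2) *
          ∫ y : EuclideanSpace ℝ (Fin k), ‖y‖ ^ 2 * exp (-(1 / 2) * ‖y‖ ^ 2) := by
        simp_rw [gaussDens_zero_apply, mul_left_comm (‖_‖ ^ 2)]
        exact integral_const_mul _ _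
    _ = k * ∫ y, gaussDens k 0 y := by
        simp_rw [integral_norm_sq_mul_exp_neg_mul_norm_sq _ one_half_pos,
          finrank_euclideanSpace_fin, gaussDens_zero_apply, integral_const_mul]
        ring
    _ = k := by rw [integral_gaussDens_zero, mul_one]

theorem tendsto_exp_neg_atBot_atTop : Tendsto (fun δ : ℝ => exp (-δ)) atBot atTop :=
  tendsto_exp_atTop.comp tendsto_neg_atBot_atTop

theorem tendsto_integral_mul_gaussDens_atBot {k : ℕ} {g : EuclideanSpace ℝ (Fin k) → ℝ}
    (hg : Integrable g) (h'g : ContinuousAt g 0) :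
    Tendsto (fun δ => ∫ y, g y * gaussDens k δ y) atBot (𝓝 (g 0)) := by
  have peak := tendsto_integral_comp_smul_smul_of_integrable_of_nonneg volume
    (φ := gaussDens k 0) (fun y => (gaussDens_pos k 0 y).le)
    (integrable_of_integral_eq_one (integral_gaussDens_zero k))
    (by simpa only [finrank_euclideanSpace_fin] using
      tendsto_norm_pow_mul_gaussDens_zero_cobounded k k) hg h'g
  rw [integral_gaussDens_zero, one_smul] at peak
  refine (peak.comp tendsto_exp_neg_atBot_atTop).congr fun δ => ?_
  simp [gaussDens_eq_pow_mul_gaussDens_zero k δ, mul_comm]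

theorem tendsto_exp_mul_integral_mul_norm_sq_mul_gaussDens_atBot {k : ℕ}
    {g : EuclideanSpace ℝ (Fin k) → ℝ} (hg : Integrable g) (h'g : ContinuousAt g 0) :
    Tendsto (fun δ => exp (-2 * δ) * ∫ y, g y * ‖y‖ ^ 2 * gaussDens k δ y) atBot
      (𝓝 (k * g 0)) := by
  have peak := tendsto_integral_comp_smul_smul_of_integrable_of_nonneg volume
    (φ := fun y => ‖y‖ ^ 2 * gaussDens k 0 y)
    (fun y => mul_nonneg (by positivity) (gaussDens_pos k 0 y).le)
    (integrable_norm_pow_mul_gaussDens_zero k 2)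
    (by simpa only [finrank_euclideanSpace_fin, ← mul_assoc, ← pow_add] using
      tendsto_norm_pow_mul_gaussDens_zero_cobounded k (k + 2)) hg h'g
  rw [integral_norm_sq_mul_gaussDens_zero, smul_eq_mul] at peak
  refine (peak.comp tendsto_exp_neg_atBot_atTop).congr fun δ => ?_
  rw [Function.comp_apply, ← integral_const_mul]
  congr 1 with y
  rw [smul_eq_mul, finrank_euclideanSpace_fin, gaussDens_eq_pow_mul_gaussDens_zero k δ,
    norm_smul, norm_of_nonneg (exp_pos _).le, mul_pow, ← exp_nat_mul, ← exp_nat_mul]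
  ring_nf

theorem smoothed_second_moment_ratio_tendsto_general
    (d : ℕ)
    (p : EuclideanSpace ℝ (Fin d) → ℝ)
    (hp_cont : Continuous p)
    (hp_prob : ∫ y, p y = 1)
    (x' : EuclideanSpace ℝ (Fin d)) (hx' : 0 < p x') :
    Tendsto
      (fun δ : ℝ =>
        (Real.exp (-2 * δ) * ∫ y, p (x' - y) * ‖y‖ ^ 2 * gaussDens d δ y) /
          ∫ y, p (x' - y) * gaussDens d δ y)
      atBot (𝓝 (d : ℝ)) := by
  have hg : Integrable fun y => p (x' - y) :=
    (integrable_of_integral_eq_one hp_prob).comp_sub_left x'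
  have h'g : ContinuousAt (fun y => p (x' - y)) 0 := by fun_prop
  have ratio := (tendsto_exp_mul_integral_mul_norm_sq_mul_gaussDens_atBot hg h'g).div
    (tendsto_integral_mul_gaussDens_atBot hg h'g) (by simpa using hx'.ne')
  rwa [sub_zero, mul_div_cancel_right₀ _ hx'.ne'] at ratio

/-- Equation (39) in the proof of Theorem 1: the ratio
`e^{−2δ} ∫ p(x'−y) ‖y‖² N^δ_d(y) dy / ∫ p(x'−y) N^δ_d(y) dy` tends to `d` as `δ → −∞`. -/
theorem smoothed_second_moment_ratio_tendsto
    (d : ℕ) (hd : 0 < d)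
    (p : EuclideanSpace ℝ (Fin d) → ℝ)
    (hp_cont : Continuous p)
    (hp_nonneg : ∀ y, 0 ≤ p y)
    (hp_prob : ∫ y, p y = 1)
    (hp_mom2 : Integrable fun y => ‖y‖ ^ 2 * p y)
    (x' : EuclideanSpace ℝ (Fin d)) (hx' : 0 < p x') :
    Tendsto
      (fun δ : ℝ =>
        (Real.exp (-2 * δ) * ∫ y, p (x' - y) * ‖y‖ ^ 2 * gaussDens d δ y) /
          ∫ y, p (x' - y) * gaussDens d δ y)
      atBot (𝓝 (d : ℝ)) :=
  smoothed_second_moment_ratio_tendsto_general d p hp_cont hp_prob x' hx'
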